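/- arXiv:2106.09877 — 3 statements merged into one kernel-verified Lean document; each statement's English description precedes it below -/
import Mathlib

section
/- Conversely, if A ∈ ℂ^(n×n) has rank r and G ∈ ℂ^(n×n) is such that there exists an invertible X with A G = X diag(I_r, 0) X⁻¹, then G is a generalized inverse of A. -/
/-!
`P := A G = X D X⁻¹` is idempotent, being similar to the idempotent `D = diag(I_r, 0)`, and has
rank `r = rank A`. Since `range P ⊆ range A` and the dimensions agree, `range P = range A`; an
idempotent acts as the identity on its range, so `P A = A`.
-/

namespace Matrix

variable {m n K : Type*} [Fintype m]

section CommRing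

variable [CommRing K]

theorem rank_mul_mul_nonsing_inv [DecidableEq m] {X : Matrix m m K} (hX : IsUnit X)
    (D : Matrix m m K) : (X * D * X⁻¹).rank = D.rank := by
  have hdet : IsUnit X.det := (isUnit_iff_isUnit_det X).mp hX
  rw [mul_assoc, rank_mul_eq_right_of_isUnit_det X _ hdet,
    rank_mul_eq_left_of_isUnit_det X⁻¹ D (isUnit_nonsing_inv_det X hdet)]

theorem isIdempotentElem_mul_mul_nonsing_inv [DecidableEq m] {X D : Matrix m m K}
    (hX : IsUnit X) (hD : IsIdempotentElem D) : IsIdempotentElem (X * D * X⁻¹) := by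
  have hXX : X⁻¹ * X = 1 := nonsing_inv_mul X ((isUnit_iff_isUnit_det X).mp hX)
  calc X * D * X⁻¹ * (X * D * X⁻¹) = X * D * (X⁻¹ * X) * D * X⁻¹ := by noncomm_ring
    _ = X * D * X⁻¹ := by rw [hXX, mul_one, mul_assoc X D D, hD.eq]

theorem isIdempotentElem_diagonal_ite [DecidableEq m] (p : m → Prop) [DecidablePred p] :
    IsIdempotentElem (diagonal fun i => if p i then (1 : K) else 0) := by
  rw [IsIdempotentElem, diagonal_mul_diagonal]
  congr 1
  ext i
  split_ifs <;> simp

theorem mul_eq_right_of_isIdempotentElem [Fintype n] {P : Matrix m m K}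
    (hP : IsIdempotentElem P) {A : Matrix m n K}
    (h : LinearMap.range A.mulVecLin ≤ LinearMap.range P.mulVecLin) : P * A = A := by
  classical
  have hP' : IsIdempotentElem P.mulVecLin := by
    rw [IsIdempotentElem, Module.End.mul_eq_comp, ← mulVecLin_mul, hP.eq]
  apply toLin'.injective
  rw [toLin'_apply', toLin'_apply', mulVecLin_mul]
  exact (LinearMap.IsIdempotentElem.comp_eq_right_iff hP' _).mpr h

end CommRing

variable [Field K]

theorem rank_diagonal_ite_lt {n r : ℕ} (hr : r ≤ n) :
    (diagonal fun i : Fin n => if (i : ℕ) < r then (1 : K) else 0).rank = r := by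
  classical
  rw [rank_diagonal]
  simpa using Fintype.card_fin_lt_of_le hr

theorem mul_mul_self_eq_of_isIdempotentElem_of_rank_eq [Fintype n] {A : Matrix m n K}
    {B : Matrix n m K} (hAB : IsIdempotentElem (A * B)) (hrank : (A * B).rank = A.rank) :
    A * B * A = A := by
  refine mul_eq_right_of_isIdempotentElem hAB (Submodule.eq_of_le_of_finrank_eq ?_ hrank).ge
  rw [mulVecLin_mul]
  exact LinearMap.range_comp_le_range _ _

end Matrix

theorem diagonalizable_proj_is_gen_inv {n : ℕ}
    (A G X : Matrix (Fin n) (Fin n) ℂ)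
    (hX : IsUnit X)
    (hAG : A * G =
      X * Matrix.diagonal (fun i : Fin n => if (i : ℕ) < A.rank then (1 : ℂ) else 0) * X⁻¹) :
    A * G * A = A := by
  have hidem : IsIdempotentElem (A * G) :=
    hAG ▸ Matrix.isIdempotentElem_mul_mul_nonsing_inv hX (Matrix.isIdempotentElem_diagonal_ite _)
  have hrank : (A * G).rank = A.rank := by
    rw [hAG, Matrix.rank_mul_mul_nonsing_inv hX, Matrix.rank_diagonal_ite_lt A.rank_le_width]
  exact Matrix.mul_mul_self_eq_of_isIdempotentElem_of_rank_eq hidem hrank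
end

section
/- With the block factorization A = L diag(I_{n1}, S) Ū as above and S^g a generalized inverse of S with S S^g = Q̂ Q̂^H for some matrix Q̂ with orthonormal columns, the product A G (with G = Ū⁻¹ diag(I_{n1}, S^g) L⁻¹) satisfies A G = X diag(I_{n1+s}, 0) X⁻¹ up to simultaneous permutation, where X = L diag(I_{n1}, Q) for a unitary Q extending Q̂ and s = rank(S). -/
open Matrix

/-! Cancelling `Ū * Ū⁻¹` in the middle of `A * G` leaves `L * diag(I, S * Sg) * L⁻¹`, and
substituting `S * Sg = Q * diag(I_s, 0) * Qᴴ` absorbs the outer factors `diag(I, Q)` and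
`diag(I, Qᴴ) = diag(I, Q)⁻¹` into the conjugating matrix `L`. -/

namespace Matrix

variable {m n R : Type*} [Fintype m] [Fintype n] [DecidableEq m] [CommRing R]

theorem fromBlocks_one_mul_fromBlocks_one (A B : Matrix n n R) :
    fromBlocks (1 : Matrix m m R) 0 0 A * fromBlocks 1 0 0 B = fromBlocks 1 0 0 (A * B) := by
  simp [fromBlocks_multiply]

theorem inv_fromBlocks_one_of_mul_eq_one [DecidableEq n] {A B : Matrix n n R} (h : B * A = 1) :
    (fromBlocks (1 : Matrix m m R) 0 0 A)⁻¹ = fromBlocks 1 0 0 B :=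
  inv_eq_left_inv (by rw [fromBlocks_one_mul_fromBlocks_one, h, fromBlocks_one])

theorem conj_fromBlocks_one_mul_mul_of_mul_eq_one [DecidableEq n] (L : Matrix (m ⊕ n) (m ⊕ n) R)
    {Q Q' : Matrix n n R} (D : Matrix n n R) (hQ : Q' * Q = 1) :
    L * fromBlocks (1 : Matrix m m R) 0 0 (Q * D * Q') * L⁻¹ =
      (L * fromBlocks 1 0 0 Q) * fromBlocks 1 0 0 D * (L * fromBlocks 1 0 0 Q)⁻¹ := by
  rw [mul_inv_rev, inv_fromBlocks_one_of_mul_eq_one hQ, ← fromBlocks_one_mul_fromBlocks_one,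
    ← fromBlocks_one_mul_fromBlocks_one]
  simp only [mul_assoc]

end Matrix

theorem hybrid_factorization_proj_similarity_general {n1 n2 s : ℕ}
    (L₁ : Matrix (Fin n1) (Fin n1) ℂ) (L₂ : Matrix (Fin n2) (Fin n1) ℂ)
    (U₁ : Matrix (Fin n1) (Fin n1) ℂ) (U₂ : Matrix (Fin n1) (Fin n2) ℂ)
    (S Sg Q : Matrix (Fin n2) (Fin n2) ℂ)
    (A G : Matrix (Fin n1 ⊕ Fin n2) (Fin n1 ⊕ Fin n2) ℂ)
    (hU : IsUnit (Matrix.fromBlocks U₁ U₂ (0 : Matrix (Fin n2) (Fin n1) ℂ) (1 : Matrix (Fin n2) (Fin n2) ℂ)))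
    (hQ : Qᴴ * Q = 1)
    (hSSg : S * Sg =
      Q * Matrix.diagonal (fun j : Fin n2 => if (j : ℕ) < s then (1 : ℂ) else 0) * Qᴴ)
    (hA : A = Matrix.fromBlocks L₁ (0 : Matrix (Fin n1) (Fin n2) ℂ) L₂ (1 : Matrix (Fin n2) (Fin n2) ℂ) * Matrix.fromBlocks (1 : Matrix (Fin n1) (Fin n1) ℂ) 0 0 S *
      Matrix.fromBlocks U₁ U₂ (0 : Matrix (Fin n2) (Fin n1) ℂ) (1 : Matrix (Fin n2) (Fin n2) ℂ))
    (hG : G = (Matrix.fromBlocks U₁ U₂ (0 : Matrix (Fin n2) (Fin n1) ℂ) (1 : Matrix (Fin n2) (Fin n2) ℂ))⁻¹ * Matrix.fromBlocks (1 : Matrix (Fin n1) (Fin n1) ℂ) 0 0 Sg *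
      (Matrix.fromBlocks L₁ (0 : Matrix (Fin n1) (Fin n2) ℂ) L₂ (1 : Matrix (Fin n2) (Fin n2) ℂ))⁻¹) :
    A * G =
      (Matrix.fromBlocks L₁ (0 : Matrix (Fin n1) (Fin n2) ℂ) L₂ (1 : Matrix (Fin n2) (Fin n2) ℂ) * Matrix.fromBlocks (1 : Matrix (Fin n1) (Fin n1) ℂ) 0 0 Q) *
        Matrix.fromBlocks (1 : Matrix (Fin n1) (Fin n1) ℂ) 0 0
          (Matrix.diagonal (fun j : Fin n2 => if (j : ℕ) < s then (1 : ℂ) else 0)) *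
      (Matrix.fromBlocks L₁ (0 : Matrix (Fin n1) (Fin n2) ℂ) L₂ (1 : Matrix (Fin n2) (Fin n2) ℂ) * Matrix.fromBlocks (1 : Matrix (Fin n1) (Fin n1) ℂ) 0 0 Q)⁻¹ := by
  set L := fromBlocks L₁ (0 : Matrix (Fin n1) (Fin n2) ℂ) L₂ 1
  have hUdet := (isUnit_iff_isUnit_det _).1 hU
  calc A * G = L * fromBlocks (1 : Matrix (Fin n1) (Fin n1) ℂ) 0 0 S *
        fromBlocks 1 0 0 Sg * L⁻¹ := by
        rw [hA, hG]
        simp only [mul_assoc, mul_nonsing_inv_cancel_left _ _ hUdet]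
    _ = _ := by
        rw [mul_assoc L, fromBlocks_one_mul_fromBlocks_one, hSSg,
          conj_fromBlocks_one_mul_mul_of_mul_eq_one L _ hQ]

/-- With `A = L * diag(I, S) * Ū` and `Sg` a generalized inverse of `S` such that
`S * Sg = Q * diag(I_s, 0) * Qᴴ` for a unitary `Q` (i.e. `S * Sg = Q̂ * Q̂ᴴ` with `Q̂` the first
`s` columns of `Q`), the matrix `A * G` with `G = Ū⁻¹ * diag(I, Sg) * L⁻¹` satisfies
`A * G = X * diag(I_{n1+s}, 0) * X⁻¹` where `X = L * diag(I, Q)` and `s = rank S`. -/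
theorem hybrid_factorization_proj_similarity {n1 n2 s : ℕ}
    (L₁ : Matrix (Fin n1) (Fin n1) ℂ) (L₂ : Matrix (Fin n2) (Fin n1) ℂ)
    (U₁ : Matrix (Fin n1) (Fin n1) ℂ) (U₂ : Matrix (Fin n1) (Fin n2) ℂ)
    (S Sg Q : Matrix (Fin n2) (Fin n2) ℂ)
    (A G : Matrix (Fin n1 ⊕ Fin n2) (Fin n1 ⊕ Fin n2) ℂ)
    (hL : IsUnit (Matrix.fromBlocks L₁ (0 : Matrix (Fin n1) (Fin n2) ℂ) L₂ (1 : Matrix (Fin n2) (Fin n2) ℂ)))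
    (hU : IsUnit (Matrix.fromBlocks U₁ U₂ (0 : Matrix (Fin n2) (Fin n1) ℂ) (1 : Matrix (Fin n2) (Fin n2) ℂ)))
    (hs : S.rank = s)
    (hQ : Qᴴ * Q = 1)
    (hSg : S * Sg * S = S)
    (hSSg : S * Sg =
      Q * Matrix.diagonal (fun j : Fin n2 => if (j : ℕ) < s then (1 : ℂ) else 0) * Qᴴ)
    (hA : A = Matrix.fromBlocks L₁ (0 : Matrix (Fin n1) (Fin n2) ℂ) L₂ (1 : Matrix (Fin n2) (Fin n2) ℂ) * Matrix.fromBlocks (1 : Matrix (Fin n1) (Fin n1) ℂ) 0 0 S *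
      Matrix.fromBlocks U₁ U₂ (0 : Matrix (Fin n2) (Fin n1) ℂ) (1 : Matrix (Fin n2) (Fin n2) ℂ))
    (hG : G = (Matrix.fromBlocks U₁ U₂ (0 : Matrix (Fin n2) (Fin n1) ℂ) (1 : Matrix (Fin n2) (Fin n2) ℂ))⁻¹ * Matrix.fromBlocks (1 : Matrix (Fin n1) (Fin n1) ℂ) 0 0 Sg *
      (Matrix.fromBlocks L₁ (0 : Matrix (Fin n1) (Fin n2) ℂ) L₂ (1 : Matrix (Fin n2) (Fin n2) ℂ))⁻¹) :
    A * G =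
      (Matrix.fromBlocks L₁ (0 : Matrix (Fin n1) (Fin n2) ℂ) L₂ (1 : Matrix (Fin n2) (Fin n2) ℂ) * Matrix.fromBlocks (1 : Matrix (Fin n1) (Fin n1) ℂ) 0 0 Q) *
        Matrix.fromBlocks (1 : Matrix (Fin n1) (Fin n1) ℂ) 0 0
          (Matrix.diagonal (fun j : Fin n2 => if (j : ℕ) < s then (1 : ℂ) else 0)) *
      (Matrix.fromBlocks L₁ (0 : Matrix (Fin n1) (Fin n2) ℂ) L₂ (1 : Matrix (Fin n2) (Fin n2) ℂ) * Matrix.fromBlocks (1 : Matrix (Fin n1) (Fin n1) ℂ) 0 0 Q)⁻¹ :=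
  hybrid_factorization_proj_similarity_general L₁ L₂ U₁ U₂ S Sg Q A G hU hQ hSSg hA hG
end

section
/- Let A ∈ ℂ^(n×n) of rank r and A^g a generalized inverse, with A A^g = X diag(I_r, 0) X⁻¹. Then the nonzero singular values of A A^g satisfy σ_max(A A^g)/σ_min⁺(A A^g) ≤ κ(X), where σ_min⁺ denotes the smallest nonzero singular value and κ(X) = ‖X‖₂ ‖X⁻¹‖₂. -/
open scoped Matrix.Norms.L2Operator

/-!
`P = A * Ag` is idempotent, and by hypothesis it is similar via `X` to an orthogonal projection
`D`, whose 2-norm is at most `1`; hence `‖P v‖ ≤ ‖X‖ ‖X⁻¹‖ ‖v‖` for every `v`. On the other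
hand, for `u ⊥ ker P` the vector `u - P u` lies in `ker P`, so `‖u‖² = Re ⟪P u, u⟫ ≤ ‖P u‖ ‖u‖`,
i.e. `P` does not shrink `u`.
-/

theorem Matrix.isStarProjection_diagonal {n R : Type*} [Fintype n] [DecidableEq n] [Semiring R]
    [StarRing R] {d : n → R} (hd : ∀ i, IsStarProjection (d i)) :
    IsStarProjection (Matrix.diagonal d) where
  isIdempotentElem := by
    rw [IsIdempotentElem, Matrix.diagonal_mul_diagonal]
    exact congrArg _ (funext fun i => (hd i).isIdempotentElem)
  isSelfAdjoint := by
    rw [IsSelfAdjoint, Matrix.star_eq_conjTranspose, Matrix.diagonal_conjTranspose]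
    exact congrArg _ (funext fun i => (hd i).isSelfAdjoint)

theorem IsIdempotentElem.toEuclideanLin {n 𝕜 : Type*} [Fintype n] [DecidableEq n] [RCLike 𝕜]
    {P : Matrix n n 𝕜} (hP : IsIdempotentElem P) :
    IsIdempotentElem (Matrix.toEuclideanLin P) :=
  congrArg ContinuousLinearMap.toLinearMap (hP.map (Matrix.toEuclideanCLM (n := n) (𝕜 := 𝕜)))

theorem norm_mul_mul_le_of_norm_le_one {R : Type*} [NonUnitalSeminormedRing R] (x d y : R)
    (hd : ‖d‖ ≤ 1) : ‖x * d * y‖ ≤ ‖x‖ * ‖y‖ :=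
  calc ‖x * d * y‖ ≤ ‖x‖ * ‖d‖ * ‖y‖ := norm_mul₃_le
    _ ≤ ‖x‖ * 1 * ‖y‖ := by gcongr
    _ = ‖x‖ * ‖y‖ := by rw [mul_one]

theorem IsIdempotentElem.norm_le_norm_apply_of_mem_ker_orthogonal {𝕜 E : Type*} [RCLike 𝕜]
    [NormedAddCommGroup E] [InnerProductSpace 𝕜 E] {T : E →ₗ[𝕜] E} (hT : IsIdempotentElem T)
    {u : E} (hu : u ∈ (LinearMap.ker T)ᗮ) : ‖u‖ ≤ ‖T u‖ := by
  have hker : u - T u ∈ LinearMap.ker T := by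
    rw [LinearMap.mem_ker, map_sub, ← Module.End.mul_apply, hT.eq, sub_self]
  have hinner : inner 𝕜 u u = inner 𝕜 (T u) u := by
    rw [← sub_eq_zero, ← inner_sub_left]
    exact Submodule.inner_right_of_mem_orthogonal hker hu
  rcases (norm_nonneg u).eq_or_lt with hu0 | hu0
  · rw [← hu0]
    exact norm_nonneg _
  refine le_of_mul_le_mul_right ?_ hu0
  calc ‖u‖ * ‖u‖ = RCLike.re (inner 𝕜 (T u) u) := by rw [← hinner, inner_self_eq_norm_mul_norm]
    _ ≤ ‖T u‖ * ‖u‖ := re_inner_le_norm _ _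

theorem cond_mul_gen_inv_le_cond_general {n : ℕ}
    (A Ag X : Matrix (Fin n) (Fin n) ℂ)
    (h : A * Ag * A = A)
    (hAG : A * Ag =
      X * Matrix.diagonal (fun i : Fin n => if (i : ℕ) < A.rank then (1 : ℂ) else 0) * X⁻¹) :
    ∀ u v : EuclideanSpace ℂ (Fin n),
      u ∈ (LinearMap.ker (Matrix.toEuclideanLin (A * Ag)))ᗮ →
      ‖Matrix.toEuclideanLin (A * Ag) v‖ * ‖u‖ ≤
        (‖X‖ * ‖X⁻¹‖) * (‖Matrix.toEuclideanLin (A * Ag) u‖ * ‖v‖) := by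
  intro u v hu
  have hidem : IsIdempotentElem (A * Ag) := by
    rw [IsIdempotentElem, ← mul_assoc, h]
  have hD : IsStarProjection
      (Matrix.diagonal fun i : Fin n => if (i : ℕ) < A.rank then (1 : ℂ) else 0) :=
    Matrix.isStarProjection_diagonal fun i => by
      split_ifs
      exacts [.one _, .zero _]
  have hnorm : ‖A * Ag‖ ≤ ‖X‖ * ‖X⁻¹‖ :=
    hAG ▸ norm_mul_mul_le_of_norm_le_one _ _ _ (hD.norm_le _)
  have hv : ‖Matrix.toEuclideanLin (A * Ag) v‖ ≤ ‖X‖ * ‖X⁻¹‖ * ‖v‖ :=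
    ((A * Ag).l2_opNorm_mulVec v).trans (by gcongr)
  calc ‖Matrix.toEuclideanLin (A * Ag) v‖ * ‖u‖
      ≤ (‖X‖ * ‖X⁻¹‖ * ‖v‖) * ‖Matrix.toEuclideanLin (A * Ag) u‖ := by
        gcongr
        exact hidem.toEuclideanLin.norm_le_norm_apply_of_mem_ker_orthogonal hu
    _ = (‖X‖ * ‖X⁻¹‖) * (‖Matrix.toEuclideanLin (A * Ag) u‖ * ‖v‖) := by ring

/-- The generalized 2-norm condition number of `A * Ag` is bounded by `κ(X) = ‖X‖₂ ‖X⁻¹‖₂`: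
for all vectors `v` and all `u` orthogonal to the kernel of `A * Ag`,
`‖(A*Ag) v‖ / ‖v‖ ≤ κ(X) * ‖(A*Ag) u‖ / ‖u‖`, i.e. the ratio between the largest and smallest
nonzero singular values of `A * Ag` is at most `κ(X)`. -/
theorem cond_mul_gen_inv_le_cond {n : ℕ}
    (A Ag X : Matrix (Fin n) (Fin n) ℂ)
    (h : A * Ag * A = A)
    (hX : IsUnit X)
    (hAG : A * Ag =
      X * Matrix.diagonal (fun i : Fin n => if (i : ℕ) < A.rank then (1 : ℂ) else 0) * X⁻¹) :
    ∀ u v : EuclideanSpace ℂ (Fin n),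
      u ∈ (LinearMap.ker (Matrix.toEuclideanLin (A * Ag)))ᗮ →
      ‖Matrix.toEuclideanLin (A * Ag) v‖ * ‖u‖ ≤
        (‖X‖ * ‖X⁻¹‖) * (‖Matrix.toEuclideanLin (A * Ag) u‖ * ‖v‖) :=
  cond_mul_gen_inv_le_cond_general A Ag X h hAG
end
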